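/- arXiv:math/0201047 — 3 statements merged into one kernel-verified Lean document; each statement's English description precedes it below -/
import Mathlib

section
/- Let h : Λ̃ → Λ̃ be a ℤ-linear map preserving the Mukai pairing (⟨h(x),h(y)⟩ = ⟨x,y⟩ for all x,y) and suppose h((0,0,1)) = (0,0,1). Then h((1,0,0)) has the form (1,b,c) for some b ∈ Λ and c ∈ ℤ with 2c = (b,b); that is, h((1,0,0)) = (1, b, (b,b)/2). -/
/-- The Mukai pairing on the Mukai lattice `ℤ ⊕ Λ ⊕ ℤ` over a `ℤ`-module `Λ`
with bilinear form `B`: `⟨(a,b,c),(a',b',c')⟩ = (b,b') - a·c' - a'·c`. -/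
def mukaiPair {Λ : Type*} [AddCommGroup Λ] [Module ℤ Λ]
    (B : Λ →ₗ[ℤ] Λ →ₗ[ℤ] ℤ) (x y : ℤ × Λ × ℤ) : ℤ :=
  B x.2.1 y.2.1 - x.1 * y.2.2 - y.1 * x.2.2

/-- A `ℤ`-linear map of the Mukai lattice preserving the Mukai pairing and
fixing `(0,0,1)` sends `(1,0,0)` to an element of the form `(1, b, (b,b)/2)`. -/
theorem stmt_3 {Λ : Type*} [AddCommGroup Λ] [Module ℤ Λ]
    (B : Λ →ₗ[ℤ] Λ →ₗ[ℤ] ℤ) (hB : ∀ x y, B x y = B y x)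
    (h : (ℤ × Λ × ℤ) →ₗ[ℤ] (ℤ × Λ × ℤ))
    (hiso : ∀ x y, mukaiPair B (h x) (h y) = mukaiPair B x y)
    (hfix : h (0, 0, 1) = (0, 0, 1)) :
    ∃ (b : Λ) (c : ℤ), h (1, 0, 0) = (1, b, c) ∧ 2 * c = B b b := by
  have h1 := hiso (1, 0, 0) (0, 0, 1)
  have h2 := hiso (1, 0, 0) (1, 0, 0)
  rw [hfix] at h1
  simp only [mukaiPair, map_zero, LinearMap.zero_apply, mul_one, mul_zero, zero_mul,
    one_mul, sub_zero, zero_sub] at h1 h2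
  have ha : (h (1, 0, 0)).1 = 1 := by omega
  rw [ha] at h2
  exact ⟨(h (1, 0, 0)).2.1, (h (1, 0, 0)).2.2, Prod.ext ha rfl, by omega⟩
end

section
/- For every integer n ≥ 1, the subgroup O(Σ_n)* has index exactly 2^{ω(n)} in O(Σ_n); equivalently, the natural map from O(Σ_n) to the orthogonal group of the discriminant quadratic form of U ⊕ ⟨2n⟩ is surjective with image of order 2^{ω(n)}. -/
open Matrix

abbrev M3 := Matrix (Fin 3) (Fin 3) ℤ

/-- The Gram matrix `Σ_n` of the lattice `U ⊕ ⟨2n⟩` in the basis `(e,v,f)`. -/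
def gram (n : ℕ) : M3 := !![0, 0, -1; 0, 2 * (n : ℤ), 0; -1, 0, 0]

/-- The isometry group `O(Σ_n) = {M ∈ GL₃(ℤ) : ᵗM·Σ_n·M = Σ_n}`. -/
def Oform (n : ℕ) : Subgroup (M3)ˣ where
  carrier := {M | (M : M3)ᵀ * gram n * (M : M3) = gram n}
  one_mem' := by simp
  mul_mem' := by
    intro a b ha hb
    simp only [Set.mem_setOf_eq, Units.val_mul, transpose_mul] at *
    calc (b : M3)ᵀ * (a : M3)ᵀ * gram n * ((a : M3) * (b : M3))
        = (b : M3)ᵀ * ((a : M3)ᵀ * gram n * (a : M3)) * (b : M3) := by noncomm_ring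
      _ = gram n := by rw [ha]; exact hb
  inv_mem' := by
    intro a ha
    simp only [Set.mem_setOf_eq] at *
    have h1 : ((a⁻¹ : (M3)ˣ) : M3)ᵀ * (a : M3)ᵀ = 1 := by
      rw [← transpose_mul]; simp
    have h2 : (a : M3) * ((a⁻¹ : (M3)ˣ) : M3) = 1 := by simp
    calc ((a⁻¹ : (M3)ˣ) : M3)ᵀ * gram n * ((a⁻¹ : (M3)ˣ) : M3)
        = ((a⁻¹ : (M3)ˣ) : M3)ᵀ * ((a : M3)ᵀ * gram n * (a : M3)) * ((a⁻¹ : (M3)ˣ) : M3) := by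
          rw [ha]
      _ = (((a⁻¹ : (M3)ˣ) : M3)ᵀ * (a : M3)ᵀ) * gram n * ((a : M3) * ((a⁻¹ : (M3)ˣ) : M3)) := by
          noncomm_ring
      _ = gram n := by rw [h1, h2, one_mul, mul_one]

/-- Entrywise reduction mod `2n` of an integer `3×3` matrix. -/
def redmod (n : ℕ) : M3 →+* Matrix (Fin 3) (Fin 3) (ZMod (2 * n)) :=
  (Int.castRingHom (ZMod (2 * n))).mapMatrix

/-- The congruence condition cutting out `O(Σ_n)*`: the second column of `M`
is congruent to `(0,1,0)ᵗ` mod `2n`, i.e. `M` induces the identity on the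
discriminant group `ℤ/2nℤ`.  (`O(Σ_n)* = Oform n ⊓ starSub n`; note that this
subgroup of `GL₃(ℤ)` is defined without reference to the form.) -/
def starSub (n : ℕ) : Subgroup (M3)ˣ where
  carrier := {M | redmod n (M : M3) *ᵥ ![0, 1, 0] = ![0, 1, 0]}
  one_mem' := by simp
  mul_mem' := by
    intro a b ha hb
    simp only [Set.mem_setOf_eq, Units.val_mul, _root_.map_mul] at *
    rw [← Matrix.mulVec_mulVec, hb, ha]
  inv_mem' := by
    intro a ha
    simp only [Set.mem_setOf_eq] at *
    have h : redmod n ((a⁻¹ : (M3)ˣ) : M3) * redmod n (a : M3) = 1 := by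
      rw [← _root_.map_mul]; simp
    conv_lhs => rw [← ha]
    rw [Matrix.mulVec_mulVec, h, Matrix.one_mulVec]

/-!
Reading off the middle entry mod `2n` is a homomorphism `O(Σ_n) → (ℤ/2n)ˣ`: the second column
of an isometry is `≡ (0, m, 0)` mod `2n`. Its kernel is `O(Σ_n)*`. The `(1,1)` entry of
`ᵗM Σ_n M = Σ_n` then gives `m² ≡ 1` mod `4n`, so `m = 2y + 1` with `n ∣ y(y + 1)`; conversely,
for such `y` a factorisation `n = de` with `d ∣ y`, `e ∣ y + 1` yields an explicit isometry with
middle entry `2y + 1`. So the index counts the solutions of `a(a + 1) = 0` in `ℤ/n`, i.e. the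
idempotents of `ℤ/n`, and by the Chinese remainder theorem there are `2^ω(n)` of them, since
`ℤ/p^k` has only `0` and `1`.
-/

theorem Matrix.isUnit_of_transpose_mul_mul_eq {m R : Type*} [Fintype m] [DecidableEq m]
    [CommRing R] [IsDomain R] {A G : Matrix m m R} (hG : G.det ≠ 0) (h : Aᵀ * G * A = G) :
    IsUnit A := by
  rw [Matrix.isUnit_iff_isUnit_det]
  have hdet := congrArg Matrix.det h
  rw [det_mul, det_mul, det_transpose] at hdet
  exact IsUnit.of_mul_eq_one _ (mul_right_cancel₀ hG (by linear_combination hdet))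

theorem MonoidHom.card_range_toHomUnits {G M : Type*} [Group G] [Monoid M] (f : G →* M) :
    Nat.card f.toHomUnits.range = Nat.card (Set.range f) := by
  show Nat.card (f.toHomUnits.range : Set Mˣ) = _
  rw [← Nat.card_image_of_injective Units.val_injective, MonoidHom.coe_range, ← Set.range_comp]
  rfl

theorem Nat.card_isIdempotentElem_pi {ι : Type*} [Fintype ι] {R : ι → Type*} [∀ i, Mul (R i)] :
    Nat.card {e : Π i, R i // IsIdempotentElem e} =
      ∏ i, Nat.card {e : R i // IsIdempotentElem e} := by
  rw [← Nat.card_pi]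
  exact Nat.card_congr <| (Equiv.subtypeEquivRight fun e ↦ funext_iff).trans
    (Equiv.subtypePiEquivPi (p := fun i (x : R i) ↦ IsIdempotentElem x))

theorem Nat.card_isIdempotentElem_congr {R S : Type*} [Mul R] [Mul S] (f : R ≃* S) :
    Nat.card {e : R // IsIdempotentElem e} = Nat.card {e : S // IsIdempotentElem e} :=
  Nat.card_congr <| f.toEquiv.subtypeEquiv fun e ↦ by
    simp [IsIdempotentElem, ← map_mul, f.injective.eq_iff]

theorem Nat.card_mul_add_one_eq_zero {R : Type*} [Ring R] :
    Nat.card {a : R // a * (a + 1) = 0} = Nat.card {e : R // IsIdempotentElem e} :=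
  Nat.card_congr <| (Equiv.addRight 1).subtypeEquiv fun a ↦ by
    rw [Equiv.coe_addRight, IsIdempotentElem, add_mul, one_mul, add_eq_right]

theorem ZMod.isIdempotentElem_iff_of_prime_pow {p k : ℕ} (hp : p.Prime) (hk : 0 < k)
    {e : ZMod (p ^ k)} : IsIdempotentElem e ↔ e = 0 ∨ e = 1 := by
  refine ⟨fun he ↦ ?_, by rintro (rfl | rfl) <;> simp [IsIdempotentElem]⟩
  have : NeZero (p ^ k) := ⟨pow_ne_zero _ hp.ne_zero⟩
  rw [← ZMod.natCast_zmod_val e] at he ⊢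
  by_cases hpe : p ∣ e.val
  · obtain ⟨c, hc⟩ := hpe
    refine .inl (he.eq_zero_of_isNilpotent ⟨k, ?_⟩)
    rw [hc, Nat.cast_mul, mul_pow, ← Nat.cast_pow, ZMod.natCast_self, zero_mul]
  · exact .inr ((IsIdempotentElem.iff_eq_one_of_isUnit
      ((ZMod.isUnit_natCast_iff_not_dvd_pow hp hk).2 hpe)).1 he)

theorem ZMod.card_isIdempotentElem {n : ℕ} (hn : n ≠ 0) :
    Nat.card {e : ZMod n // IsIdempotentElem e} = 2 ^ n.primeFactors.card := by
  rw [Nat.card_isIdempotentElem_congr (ZMod.equivPi (n := n) hn).toMulEquiv,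
    Nat.card_isIdempotentElem_pi, ← Finset.card_attach, ← Finset.prod_const,
    ← Finset.univ_eq_attach]
  refine Finset.prod_congr rfl fun p _ ↦ ?_
  have hp := Nat.prime_of_mem_primeFactors p.2
  have hk : 0 < n.factorization p :=
    hp.factorization_pos_of_dvd hn (Nat.dvd_of_mem_primeFactors p.2)
  have : Fact (1 < (p : ℕ) ^ n.factorization p) := ⟨Nat.one_lt_pow hk.ne' hp.one_lt⟩
  simp_rw [ZMod.isIdempotentElem_iff_of_prime_pow hp hk]
  rw [← Set.coe_ofPred, Nat.card_coe_set_eq, Set.ofPred_or, Set.ofPred_eq_eq_singleton,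
    Set.ofPred_eq_eq_singleton, Set.singleton_union, Set.ncard_pair zero_ne_one]

theorem Nat.exists_mul_eq_of_dvd_mul_succ {n y : ℕ} (h : n ∣ y * (y + 1)) :
    ∃ d e : ℕ, d * e = n ∧ d ∣ y ∧ e ∣ y + 1 := by
  refine ⟨n.gcd y, n.gcd (y + 1), ?_, Nat.gcd_dvd_right _ _, Nat.gcd_dvd_right _ _⟩
  rw [← Nat.Coprime.gcd_mul n (Nat.coprime_self_add_right.2 (Nat.coprime_one_right y)),
    Nat.gcd_eq_left h]

theorem ZMod.intCast_eq_zero_of_two_mul_dvd {n : ℕ} {a : ℤ} (h : 2 * (n : ℤ) ∣ a) :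
    (a : ZMod (2 * n)) = 0 :=
  (ZMod.intCast_zmod_eq_zero_iff_dvd a (2 * n)).2 (by exact_mod_cast h)

theorem ZMod.intCast_two_mul_add_one_eq_iff {n : ℕ} (y z : ℤ) :
    ((2 * y + 1 : ℤ) : ZMod (2 * n)) = ((2 * z + 1 : ℤ) : ZMod (2 * n)) ↔ (y : ZMod n) = z := by
  rw [ZMod.intCast_eq_intCast_iff_dvd_sub, ZMod.intCast_eq_intCast_iff_dvd_sub, Nat.cast_mul,
    Nat.cast_two, show 2 * z + 1 - (2 * y + 1) = 2 * (z - y) by ring]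
  exact mul_dvd_mul_iff_left two_ne_zero

section Isometry

variable {n : ℕ} {M : M3ˣ}

theorem gram_mul_of_mem_Oform (hM : M ∈ Oform n) :
    gram n * (M : M3) = ((M⁻¹ : M3ˣ) : M3)ᵀ * gram n := by
  have hinv : ((M⁻¹ : M3ˣ) : M3)ᵀ * (M : M3)ᵀ = 1 := by
    rw [← transpose_mul, Units.mul_inv, transpose_one]
  calc gram n * (M : M3) = ((M⁻¹ : M3ˣ) : M3)ᵀ * (M : M3)ᵀ * gram n * (M : M3) := by
        rw [hinv, one_mul]
    _ = ((M⁻¹ : M3ˣ) : M3)ᵀ * ((M : M3)ᵀ * gram n * (M : M3)) := by noncomm_ring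
    _ = ((M⁻¹ : M3ˣ) : M3)ᵀ * gram n := by rw [show _ = gram n from hM]

theorem two_mul_dvd_of_mem_Oform (hM : M ∈ Oform n) :
    2 * (n : ℤ) ∣ (M : M3) 0 1 ∧ 2 * (n : ℤ) ∣ (M : M3) 2 1 := by
  have h := gram_mul_of_mem_Oform hM
  have h21 := congrFun₂ h 2 1
  have h01 := congrFun₂ h 0 1
  simp [_root_.gram, mul_apply, Fin.sum_univ_three] at h21 h01
  exact ⟨⟨-(M : M3)⁻¹ 1 2, by linarith⟩, ⟨-(M : M3)⁻¹ 1 0, by linarith⟩⟩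

theorem four_mul_dvd_sq_sub_one_of_mem_Oform (hn : n ≠ 0) (hM : M ∈ Oform n) :
    4 * (n : ℤ) ∣ (M : M3) 1 1 ^ 2 - 1 := by
  obtain ⟨⟨a, ha⟩, ⟨c, hc⟩⟩ := two_mul_dvd_of_mem_Oform hM
  have h := congrFun₂ (show (M : M3)ᵀ * gram n * (M : M3) = gram n from hM) 1 1
  simp [_root_.gram, mul_apply, Fin.sum_univ_three, ha, hc] at h
  refine ⟨a * c, mul_left_cancel₀ (by positivity : (2 * (n : ℤ)) ≠ 0) ?_⟩
  linear_combination h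

theorem intCast_mul_apply_one_one (A : M3ˣ) (hM : M ∈ Oform n) :
    (((A * M : M3ˣ) : M3) 1 1 : ZMod (2 * n)) = ((A : M3) 1 1 : ZMod (2 * n)) * ((M : M3) 1 1) := by
  obtain ⟨h01, h21⟩ := two_mul_dvd_of_mem_Oform hM
  simp [mul_apply, Fin.sum_univ_three, ZMod.intCast_eq_zero_of_two_mul_dvd h01,
    ZMod.intCast_eq_zero_of_two_mul_dvd h21]

theorem mem_starSub_iff (hM : M ∈ Oform n) :
    M ∈ starSub n ↔ (((M : M3) 1 1 : ℤ) : ZMod (2 * n)) = 1 := by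
  obtain ⟨h01, h21⟩ := two_mul_dvd_of_mem_Oform hM
  simp [starSub, redmod, funext_iff, Fin.forall_fin_succ, mulVec, dotProduct, Fin.sum_univ_three,
    ZMod.intCast_eq_zero_of_two_mul_dvd h01, ZMod.intCast_eq_zero_of_two_mul_dvd h21]

end Isometry

def middleEntryHom (n : ℕ) : Oform n →* ZMod (2 * n) where
  toFun M := ((M : M3ˣ) : M3) 1 1
  map_one' := by simp
  map_mul' A B := intCast_mul_apply_one_one A B.2

theorem ker_toHomUnits_middleEntryHom (n : ℕ) :
    (middleEntryHom n).toHomUnits.ker = (starSub n).subgroupOf (Oform n) := by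
  ext M
  rw [MonoidHom.mem_ker, Subgroup.mem_subgroupOf, mem_starSub_iff M.2, Units.ext_iff,
    MonoidHom.coe_toHomUnits]
  rfl

theorem det_gram (n : ℕ) : (gram n).det = -(2 * n) := by
  simp [_root_.gram, det_fin_three]

/-- For `n = de`, the columns are the isotropic vectors `(e, 1, d)` and `(dμ², μν, eν²)`,
pairing to `-(eν - dμ)²`, and `(2deμ, dμ + eν, 2deν)`, orthogonal to both and of norm
`2de(eν - dμ)²`. -/
def factorIsometry (d e μ ν : ℤ) : M3 :=
  !![e, 2 * d * e * μ, d * μ ^ 2; 1, d * μ + e * ν, μ * ν; d, 2 * d * e * ν, e * ν ^ 2]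

theorem factorIsometry_transpose_mul_gram_mul {n : ℕ} {d e μ ν : ℤ} (hn : (n : ℤ) = d * e)
    (h : e * ν - d * μ = 1) :
    (factorIsometry d e μ ν)ᵀ * gram n * factorIsometry d e μ ν = gram n := by
  ext i j
  fin_cases i <;> fin_cases j <;>
    simp [factorIsometry, _root_.gram, hn, mul_apply, Fin.sum_univ_three] <;>
    first
      | ring1
      | linear_combination -(e * ν - d * μ + 1) * h
      | linear_combination 2 * d * e * (e * ν - d * μ + 1) * h

def oddLift (n : ℕ) (a : ZMod n) : ZMod (2 * n) := ((2 * (a.val : ℤ) + 1 : ℤ) : ZMod (2 * n))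

section OddLift

variable {n : ℕ} [NeZero n]

theorem oddLift_intCast (y : ℤ) : oddLift n y = ((2 * y + 1 : ℤ) : ZMod (2 * n)) :=
  (ZMod.intCast_two_mul_add_one_eq_iff _ _).2 (by simp)

theorem oddLift_injective : Function.Injective (oddLift n) := fun a b h ↦ by
  simpa using (ZMod.intCast_two_mul_add_one_eq_iff _ _).1 h

theorem middleEntryHom_mem_image_oddLift (M : Oform n) :
    middleEntryHom n M ∈ oddLift n '' {a | a * (a + 1) = 0} := by
  obtain ⟨k, hk⟩ := four_mul_dvd_sq_sub_one_of_mem_Oform (NeZero.ne n) M.2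
  obtain ⟨y, hy⟩ : Odd (((M : M3ˣ) : M3) 1 1) :=
    (Int.odd_pow' two_ne_zero).1 ⟨2 * n * k, by linear_combination hk⟩
  have hdvd : (n : ℤ) ∣ y * (y + 1) :=
    ⟨k, mul_left_cancel₀ four_ne_zero (by rw [hy] at hk; linear_combination hk)⟩
  refine ⟨y, ?_, ?_⟩
  · show (y : ZMod n) * (y + 1) = 0
    exact_mod_cast (ZMod.intCast_zmod_eq_zero_iff_dvd _ n).2 hdvd
  · rw [oddLift_intCast, ← hy]
    rfl

theorem oddLift_mem_range_middleEntryHom {a : ZMod n} (ha : a * (a + 1) = 0) :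
    oddLift n a ∈ Set.range (middleEntryHom n) := by
  have hdvd : n ∣ a.val * (a.val + 1) := by
    rw [← ZMod.natCast_eq_zero_iff]
    simpa using ha
  obtain ⟨d, e, hde, ⟨μ, hμ⟩, ⟨ν, hν⟩⟩ := Nat.exists_mul_eq_of_dvd_mul_succ hdvd
  have hμ' : (a.val : ℤ) = d * μ := by exact_mod_cast hμ
  have hν' : (a.val : ℤ) + 1 = e * ν := by exact_mod_cast hν
  have hA := factorIsometry_transpose_mul_gram_mul (n := n) (d := d) (e := e) (μ := μ)
    (ν := ν) (by rw [← hde, Nat.cast_mul]) (by linear_combination hμ' - hν')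
  have hunit := Matrix.isUnit_of_transpose_mul_mul_eq
    (by simpa [det_gram] using NeZero.ne n) hA
  refine ⟨⟨hunit.unit, hA⟩, ?_⟩
  show (((d : ℤ) * μ + e * ν : ℤ) : ZMod (2 * n)) = ((2 * (a.val : ℤ) + 1 : ℤ) : ZMod (2 * n))
  rw [← hμ', ← hν']
  congr 1
  ring

theorem range_middleEntryHom :
    Set.range (middleEntryHom n) = oddLift n '' {a | a * (a + 1) = 0} := by
  refine Set.Subset.antisymm ?_ ?_
  · rintro _ ⟨M, rfl⟩
    exact middleEntryHom_mem_image_oddLift M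
  · rintro _ ⟨a, ha, rfl⟩
    exact oddLift_mem_range_middleEntryHom ha

end OddLift

/-- For `n ≥ 1`, the subgroup `O(Σ_n)* = O(Σ_n) ∩ starSub n` has index exactly
`2^{ω(n)}` in `O(Σ_n)`, where `ω(n)` is the number of distinct prime divisors
of `n`; equivalently the natural map from `O(Σ_n)` to the orthogonal group of
the discriminant form of `U ⊕ ⟨2n⟩` is surjective with image of order
`2^{ω(n)}`. -/
theorem stmt_6 (n : ℕ) (hn : 1 ≤ n) :
    (starSub n).relIndex (Oform n) = 2 ^ n.primeFactors.card := by
  have : NeZero n := ⟨by omega⟩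
  rw [Subgroup.relIndex, ← ker_toHomUnits_middleEntryHom, Subgroup.index_ker,
    MonoidHom.card_range_toHomUnits, range_middleEntryHom,
    Nat.card_image_of_injective oddLift_injective, ← ZMod.card_isIdempotentElem (NeZero.ne n)]
  exact Nat.card_mul_add_one_eq_zero
end

section
/- For every integer N ≥ 0, the constant term (the coefficient of X⁰Y⁰Z⁰) of the Laurent polynomial (X + X⁻¹ + Y + Y⁻¹ + Z + Z⁻¹)^{2N} in ℤ[X^{±1}, Y^{±1}, Z^{±1}] equals Σ_{k+l+m=N, k,l,m ≥ 0} (2N)! / ((k!)²·(l!)²·(m!)²), and the constant term of (X + X⁻¹ + Y + Y⁻¹ + Z + Z⁻¹)^{2N+1} equals 0. -/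
open scoped Nat

/-- The Laurent polynomial `X + X⁻¹ + Y + Y⁻¹ + Z + Z⁻¹` in
`ℤ[X^{±1},Y^{±1},Z^{±1}]`, realized as the group algebra `ℤ[ℤ³]`. -/
noncomputable def hexLaurent : AddMonoidAlgebra ℤ (ℤ × ℤ × ℤ) :=
  AddMonoidAlgebra.single (1, 0, 0) 1 + AddMonoidAlgebra.single (-1, 0, 0) 1 +
  AddMonoidAlgebra.single (0, 1, 0) 1 + AddMonoidAlgebra.single (0, -1, 0) 1 +
  AddMonoidAlgebra.single (0, 0, 1) 1 + AddMonoidAlgebra.single (0, 0, -1) 1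

/-! Write `X + X⁻¹ + Y + Y⁻¹ + Z + Z⁻¹ = u(X) + u(Y) + u(Z)` with `u(T) = T + T⁻¹`. The multinomial
theorem expands the `n`-th power into terms `multinomial(k) · u(X)^k₀ u(Y)^k₁ u(Z)^k₂`, and the
constant term of such a product of one-variable factors is the product of their constant terms.
The constant term of `u^j` is `C(j, j/2)` for even `j` and `0` for odd `j`, so only `k = 2p`
survives, which forces `n` to be even, and then
`multinomial(2p) · ∏ C(2pᵢ, pᵢ) · ∏ (pᵢ!)² = (2N)!`. -/

open AddMonoidAlgebra Finset
open scoped Pointwise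

namespace AddMonoidAlgebra

variable {R G H : Type*} [Semiring R] [AddMonoid G] [AddMonoid H]

lemma coeff_mapDomainRingHom_inl_mul_inr (p : R[G]) (q : R[H]) (g : G) (h : H) :
    (mapDomainRingHom R (AddMonoidHom.inl G H) p *
      mapDomainRingHom R (AddMonoidHom.inr G H) q).coeff (g, h) = p.coeff g * q.coeff h := by
  induction p using induction_linear with
  | zero => simp
  | add p p' hp hp' => rw [map_add, add_mul, coeff_add, Finsupp.add_apply, hp, hp', coeff_add,
      Finsupp.add_apply, add_mul]
  | single a r =>
    induction q using induction_linear with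
    | zero => simp
    | add q q' hq hq' => rw [map_add, mul_add, coeff_add, Finsupp.add_apply, hq, hq', coeff_add,
      Finsupp.add_apply, mul_add]
    | single b s =>
      by_cases ha : a = g <;> by_cases hb : b = h <;> simp [single_mul_single, ha, hb]

end AddMonoidAlgebra

theorem Nat.multinomial_two_mul_mul_prod_centralBinom {ι : Type*} (s : Finset ι) (p : ι → ℕ) :
    multinomial s (fun i => 2 * p i) * (∏ i ∈ s, (p i).centralBinom) * ∏ i ∈ s, (p i)! ^ 2 =
      (2 * ∑ i ∈ s, p i)! := by
  have centralBinom_mul_factorial_sq (m : ℕ) : m.centralBinom * m ! ^ 2 = (2 * m)! := by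
    rw [Nat.centralBinom_eq_two_mul_choose, sq, ← mul_assoc,
      ← Nat.choose_mul_factorial_mul_factorial (by omega : m ≤ 2 * m)]
    congr 2; omega
  rw [mul_assoc, ← prod_mul_distrib, mul_comm, mul_sum]
  simp only [centralBinom_mul_factorial_sq]
  exact Nat.multinomial_spec s _

noncomputable def xAddXInv : ℤ[ℤ] := single 1 1 + single (-1) 1

lemma coeff_zero_xAddXInv_pow (n : ℕ) :
    (xAddXInv ^ n).coeff 0 = ∑ t ∈ range (n + 1), if 2 * t = n then (n.choose t : ℤ) else 0 := by
  rw [xAddXInv, add_pow, coeff_sum, Finsupp.finsetSum_apply]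
  refine sum_congr rfl fun t ht => ?_
  have ht : t ≤ n := Nat.lt_succ_iff.mp (mem_range.mp ht)
  have hexp : (t • 1 + (n - t) • (-1) : ℤ) = 0 ↔ 2 * t = n := by
    simp only [nsmul_eq_mul, Nat.cast_sub ht]; omega
  simp only [single_pow, one_pow, single_mul_single, mul_one, natCast_def, coeff_single,
    Finsupp.single_apply, add_zero, one_mul, hexp]

lemma coeff_zero_xAddXInv_pow_two_mul (m : ℕ) :
    (xAddXInv ^ (2 * m)).coeff 0 = m.centralBinom := by
  rw [coeff_zero_xAddXInv_pow, sum_eq_single m]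
  · simp [Nat.centralBinom_eq_two_mul_choose]
  · intro t _ htm
    simp [htm]
  · exact fun h => absurd (mem_range.mpr (by omega)) h

lemma coeff_zero_xAddXInv_pow_of_odd {n : ℕ} (hn : Odd n) : (xAddXInv ^ n).coeff 0 = 0 := by
  rw [coeff_zero_xAddXInv_pow]
  refine sum_eq_zero fun t _ => if_neg ?_
  rintro rfl
  exact Nat.not_odd_iff_even.mpr (even_two_mul t) hn

noncomputable def embedCoord (i : Fin 3) : ℤ[ℤ] →+* ℤ[ℤ × ℤ × ℤ] :=
  mapDomainRingHom ℤ (![AddMonoidHom.inl ℤ (ℤ × ℤ), (AddMonoidHom.inr ℤ (ℤ × ℤ)).comp (.inl ℤ ℤ),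
    (AddMonoidHom.inr ℤ (ℤ × ℤ)).comp (.inr ℤ ℤ)] i)

lemma coeff_zero_prod_embedCoord (p : Fin 3 → ℤ[ℤ]) :
    (∏ i, embedCoord i (p i)).coeff (0, 0, 0) = ∏ i, (p i).coeff 0 := by
  have h0 : embedCoord 0 = mapDomainRingHom ℤ (.inl ℤ (ℤ × ℤ)) := rfl
  have h1 : embedCoord 1 =
      (mapDomainRingHom ℤ (.inr ℤ (ℤ × ℤ))).comp (mapDomainRingHom ℤ (.inl ℤ ℤ)) :=
    mapDomainRingHom_comp _ _
  have h2 : embedCoord 2 =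
      (mapDomainRingHom ℤ (.inr ℤ (ℤ × ℤ))).comp (mapDomainRingHom ℤ (.inr ℤ ℤ)) :=
    mapDomainRingHom_comp _ _
  rw [Fin.prod_univ_three, Fin.prod_univ_three, mul_assoc, h0, h1, h2, RingHom.comp_apply,
    RingHom.comp_apply, ← map_mul, coeff_mapDomainRingHom_inl_mul_inr,
    coeff_mapDomainRingHom_inl_mul_inr, mul_assoc]

lemma hexLaurent_eq_sum_embedCoord : hexLaurent = ∑ i, embedCoord i xAddXInv := by
  simp only [hexLaurent, xAddXInv, embedCoord, Fin.sum_univ_three, map_add, mapDomainRingHom_apply,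
    mapDomain_single, Matrix.cons_val_zero, Matrix.cons_val_one, Matrix.cons_val_two,
    Matrix.head_cons, Matrix.tail_cons, AddMonoidHom.coe_comp, Function.comp_apply,
    AddMonoidHom.inl_apply, AddMonoidHom.inr_apply, Prod.mk_zero_zero]
  abel

lemma coeff_zero_hexLaurent_pow (n : ℕ) :
    (hexLaurent ^ n).coeff (0, 0, 0) =
      ∑ k ∈ piAntidiag univ n, Nat.multinomial univ k * ∏ i : Fin 3, (xAddXInv ^ k i).coeff 0 := by
  rw [hexLaurent_eq_sum_embedCoord, sum_pow_eq_sum_piAntidiag, coeff_sum,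
    Finsupp.finsetSum_apply]
  refine sum_congr rfl fun k _ => ?_
  simp only [← map_pow]
  rw [← nsmul_eq_mul, coeff_smul_apply, coeff_zero_prod_embedCoord, nsmul_eq_mul]

lemma prod_coeff_zero_xAddXInv_pow_eq_zero {ι : Type*} [Fintype ι] {k : ι → ℕ} {i : ι}
    (hi : Odd (k i)) : ∏ j, (xAddXInv ^ k j).coeff 0 = 0 :=
  prod_eq_zero (mem_univ i) (coeff_zero_xAddXInv_pow_of_odd hi)

lemma coeff_zero_hexLaurent_pow_odd {n : ℕ} (hn : Odd n) :
    (hexLaurent ^ n).coeff (0, 0, 0) = 0 := by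
  rw [coeff_zero_hexLaurent_pow]
  refine sum_eq_zero fun k hk => ?_
  obtain ⟨i, hi⟩ : ∃ i, ¬ 2 ∣ k i := by
    by_contra! hk_even
    have h2n : 2 ∣ n := (mem_piAntidiag.mp hk).1 ▸ dvd_sum fun i _ => hk_even i
    exact Nat.not_even_iff_odd.mpr hn (even_iff_two_dvd.mpr h2n)
  rw [prod_coeff_zero_xAddXInv_pow_eq_zero (i := i) (Nat.odd_iff.mpr (by omega)), mul_zero]

lemma coeff_zero_hexLaurent_pow_two_mul (N : ℕ) :
    (hexLaurent ^ (2 * N)).coeff (0, 0, 0) =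
      ∑ p ∈ piAntidiag univ N,
        Nat.multinomial univ (fun i => 2 * p i) * ∏ i : Fin 3, ((p i).centralBinom : ℤ) := by
  calc (hexLaurent ^ (2 * N)).coeff (0, 0, 0)
      = ∑ k ∈ (piAntidiag univ N).image (2 • ·),
          Nat.multinomial univ k * ∏ i, (xAddXInv ^ k i).coeff 0 := by
        rw [coeff_zero_hexLaurent_pow,
          ← smul_finset_def (s := piAntidiag (univ : Finset (Fin 3)) N),
          nsmul_piAntidiag _ _ two_ne_zero]
        symm
        convert sum_filter_of_ne fun k _ hk => ?_
        intro i _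
        by_contra hi
        exact hk (by
          rw [prod_coeff_zero_xAddXInv_pow_eq_zero (i := i) (Nat.odd_iff.mpr (by omega)), mul_zero])
    _ = _ := by
        rw [sum_image fun p _ q _ hpq => nsmul_right_injective two_ne_zero hpq]
        simp only [Pi.smul_apply, smul_eq_mul, coeff_zero_xAddXInv_pow_two_mul]
        rfl

/-- The constant term of `(X + X⁻¹ + Y + Y⁻¹ + Z + Z⁻¹)^{2N}` equals
`Σ_{k+l+m=N} (2N)!/((k!)²(l!)²(m!)²)`, and the constant term of the odd power
`(X + X⁻¹ + Y + Y⁻¹ + Z + Z⁻¹)^{2N+1}` vanishes. -/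
theorem stmt_12 (N : ℕ) :
    (((hexLaurent ^ (2 * N)).coeff (0, 0, 0) : ℤ) : ℚ) =
      ∑ p ∈ Finset.Nat.antidiagonalTuple 3 N,
        ((2 * N)! : ℚ) / (((p 0)! ^ 2 * (p 1)! ^ 2 * (p 2)! ^ 2 : ℕ) : ℚ) ∧
    (hexLaurent ^ (2 * N + 1)).coeff (0, 0, 0) = 0 := by
  refine ⟨?_, coeff_zero_hexLaurent_pow_odd (odd_two_mul_add_one N)⟩
  rw [coeff_zero_hexLaurent_pow_two_mul, ← piAntidiag_univ_fin_eq_antidiagonalTuple]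
  push_cast
  refine sum_congr rfl fun p hp => ?_
  rw [eq_div_iff (by positivity), ← (mem_piAntidiag.mp hp).1]
  have h := Nat.multinomial_two_mul_mul_prod_centralBinom univ p
  rw [Fin.prod_univ_three (fun i => (p i)! ^ 2)] at h
  exact_mod_cast h
end
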